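/- The only subtractive left ideals of the semiring S = M₂(ℝ⁺) are: {0}, S, E₁ = { [[a,0],[b,0]] }, E₂ = { [[0,c],[0,d]] }, and Nᵣ = { [[ra,a],[rb,b]] } for r ∈ ℝ⁺ \ {0}. Consequently, every strictly ascending (and every strictly descending) chain of subtractive left ideals of S has length at most 3, so S is left k-Noetherian and left k-Artinian. -/

import Mathlib

/-- The 2×2 matrix semiring over the nonnegative reals. -/
abbrev M2 : Type := Matrix (Fin 2) (Fin 2) NNReal

/-- A subset of the semiring is a left ideal. -/
def IsLeftIdeal (I : Set M2) : Prop :=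
  0 ∈ I ∧ (∀ x ∈ I, ∀ y ∈ I, x + y ∈ I) ∧ ∀ s : M2, ∀ x ∈ I, s * x ∈ I

/-- A subset is subtractive: `s + x = y` with `x, y ∈ I` implies `s ∈ I`. -/
def IsSubtractive (I : Set M2) : Prop :=
  ∀ s x y : M2, x ∈ I → y ∈ I → s + x = y → s ∈ I

/-- `E₁ = { [[a,0],[b,0]] : a, b ∈ ℝ⁺ }`. -/
def E1 : Set M2 := {A | A 0 1 = 0 ∧ A 1 1 = 0}

/-- `E₂ = { [[0,c],[0,d]] : c, d ∈ ℝ⁺ }`. -/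
def E2 : Set M2 := {A | A 0 0 = 0 ∧ A 1 0 = 0}

/-- `Nᵣ = { [[ra,a],[rb,b]] : a, b ∈ ℝ⁺ }`. -/
def Nr (r : NNReal) : Set M2 :=
  {A | ∃ a b : NNReal, A 0 0 = r * a ∧ A 0 1 = a ∧ A 1 0 = r * b ∧ A 1 1 = b}


/-!
A left ideal `I` of `M₂(ℝ⁺)` is determined by its row cone `W = {v | [[v], [0]] ∈ I}`: left
multiplication by matrix units moves rows around, so `A ∈ I` iff both rows of `A` lie in `W`.
If `I` is subtractive, so is `W`, and a subtractive cone in `ℝ⁺²` containing two non-proportional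
vectors `v, w` (say `v₀ w₁ < v₁ w₀`) is everything: `v₁ w - w₁ v` is a nonzero vector on the first
axis, and subtracting a multiple of it from `v` leaves a nonzero vector on the second. Hence `W` is
`0`, a ray or `ℝ⁺²`, which gives the listed ideals. In a chain `I₁ ⊊ I₂ ⊊ I₃` the row cone of `I₃`
strictly contains a nonzero cone, so `I₃ = S` and the chain cannot be extended.
-/

namespace NNRealPlane

variable {W : Submodule NNReal (Fin 2 → NNReal)}

lemma exists_eq_smul_of_mul_eq_mul {v w : Fin 2 → NNReal} (hv : v ≠ 0)
    (h : v 0 * w 1 = v 1 * w 0) : ∃ t : NNReal, w = t • v := by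
  by_cases hv0 : v 0 = 0
  · have hv1 : v 1 ≠ 0 := fun hv1 => hv (funext <| Fin.forall_fin_two.2 ⟨hv0, hv1⟩)
    refine ⟨w 1 / v 1, funext <| Fin.forall_fin_two.2 ⟨?_, ?_⟩⟩
    · simp_all
    · simp [div_mul_cancel₀ _ hv1]
  · refine ⟨w 0 / v 0, funext <| Fin.forall_fin_two.2 ⟨?_, ?_⟩⟩
    · simp [div_mul_cancel₀ _ hv0]
    · rw [Pi.smul_apply, smul_eq_mul, div_mul_eq_mul_div, eq_div_iff hv0]
      linarith

lemma eq_top_of_mem_of_mem {a b : NNReal} (ha : a ≠ 0) (hb : b ≠ 0)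
    (h0 : ![a, 0] ∈ W) (h1 : ![0, b] ∈ W) : W = ⊤ := by
  refine eq_top_iff.2 fun x _ => ?_
  have hx : x = (x 0 / a) • ![a, 0] + (x 1 / b) • ![0, b] :=
    funext <| Fin.forall_fin_two.2
      ⟨by simp [div_mul_cancel₀ _ ha], by simp [div_mul_cancel₀ _ hb]⟩
  rw [hx]
  exact W.add_mem (W.smul_mem _ h0) (W.smul_mem _ h1)

lemma sub_mem_of_le (hW : ∀ x ∈ W, ∀ y, x + y ∈ W → y ∈ W) {x y : Fin 2 → NNReal}
    (hx : x ∈ W) (hy : y ∈ W) (hxy : x ≤ y) : y - x ∈ W :=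
  hW x hx _ ((add_tsub_cancel_of_le hxy).symm ▸ hy)

-- `v 1 • w - w 1 • v = ![a, 0]` with `a ≠ 0`;
-- subtracting a multiple of it from `v` leaves `![0, v 1]`.
lemma eq_top_of_mul_lt (hW : ∀ x ∈ W, ∀ y, x + y ∈ W → y ∈ W) {v w : Fin 2 → NNReal}
    (hv : v ∈ W) (hw : w ∈ W) (h : v 0 * w 1 < v 1 * w 0) : W = ⊤ := by
  have hv1 : v 1 ≠ 0 := by rintro hv1; simp [hv1] at h
  set a := v 1 * w 0 - w 1 * v 0
  have ha : a ≠ 0 := (tsub_pos_of_lt (by rwa [mul_comm (w 1)])).ne'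
  have hu : ![a, 0] ∈ W := by
    have hle : w 1 • v ≤ v 1 • w :=
      Fin.forall_fin_two.2 ⟨by simpa [mul_comm (w 1)] using h.le, by simp [mul_comm]⟩
    convert sub_mem_of_le hW (W.smul_mem (w 1) hv) (W.smul_mem (v 1) hw) hle using 1
    exact funext <| Fin.forall_fin_two.2 ⟨rfl, by simp [mul_comm]⟩
  have hv0 : ![v 0, 0] ∈ W := by
    convert W.smul_mem (v 0 / a) hu using 1
    exact funext <| Fin.forall_fin_two.2 ⟨by simp [div_mul_cancel₀ _ ha], by simp⟩
  have hv' : ![0, v 1] ∈ W := by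
    convert sub_mem_of_le hW hv0 hv (Fin.forall_fin_two.2 ⟨by simp, by simp⟩) using 1
    exact funext <| Fin.forall_fin_two.2 ⟨by simp, by simp⟩
  exact eq_top_of_mem_of_mem ha hv1 hu hv'

lemma eq_top_of_mul_ne_mul (hW : ∀ x ∈ W, ∀ y, x + y ∈ W → y ∈ W) {v w : Fin 2 → NNReal}
    (hv : v ∈ W) (hw : w ∈ W) (h : v 0 * w 1 ≠ v 1 * w 0) : W = ⊤ := by
  rcases h.lt_or_gt with h | h
  · exact eq_top_of_mul_lt hW hv hw h
  · exact eq_top_of_mul_lt hW hw hv (by simpa only [mul_comm] using h)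

theorem eq_bot_or_eq_top_or_line (hW : ∀ x ∈ W, ∀ y, x + y ∈ W → y ∈ W) :
    W = ⊥ ∨ W = ⊤ ∨ (∀ x, x ∈ W ↔ x 1 = 0) ∨ ∃ r : NNReal, ∀ x, x ∈ W ↔ x 0 = r * x 1 := by
  rcases eq_or_ne W ⊥ with hbot | hbot
  · exact .inl hbot
  obtain ⟨v, hv, hv0⟩ := W.ne_bot_iff.1 hbot
  by_cases hline : ∃ w ∈ W, v 0 * w 1 ≠ v 1 * w 0
  · obtain ⟨w, hw, hvw⟩ := hline
    exact .inr <| .inl <| eq_top_of_mul_ne_mul hW hv hw hvw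
  push Not at hline
  have hmem : ∀ x, x ∈ W ↔ v 0 * x 1 = v 1 * x 0 := fun x =>
    ⟨hline x, fun hx => by
      obtain ⟨t, rfl⟩ := exists_eq_smul_of_mul_eq_mul hv0 hx
      exact W.smul_mem t hv⟩
  refine .inr <| .inr ?_
  by_cases hv1 : v 1 = 0
  · have hv0' : v 0 ≠ 0 := fun h => hv0 (funext <| Fin.forall_fin_two.2 ⟨h, hv1⟩)
    exact .inl fun x => by simp [hmem, hv1, hv0']
  · refine .inr ⟨v 0 / v 1, fun x => ?_⟩
    rw [hmem, div_mul_eq_mul_div, eq_div_iff hv1]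
    constructor <;> intro h <;> linarith

lemma eq_top_of_ne_bot_of_lt (hW : ∀ x ∈ W, ∀ y, x + y ∈ W → y ∈ W)
    {V : Submodule NNReal (Fin 2 → NNReal)} (hV : V ≠ ⊥) (hVW : V < W) : W = ⊤ := by
  obtain ⟨v, hv, hv0⟩ := V.ne_bot_iff.1 hV
  obtain ⟨w, hw, hwV⟩ := SetLike.exists_of_lt hVW
  refine eq_top_of_mul_ne_mul hW (hVW.le hv) hw fun h => hwV ?_
  obtain ⟨t, rfl⟩ := exists_eq_smul_of_mul_eq_mul hv0 h
  exact V.smul_mem t hv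

theorem not_lt_lt_lt {W₁ W₂ W₄ : Submodule NNReal (Fin 2 → NNReal)}
    (hW : ∀ x ∈ W, ∀ y, x + y ∈ W → y ∈ W) (h₁ : W₁ < W₂) (h₂ : W₂ < W) : ¬W < W₄ := by
  rw [eq_top_of_ne_bot_of_lt hW (bot_le.trans_lt h₁).ne' h₂]
  exact not_top_lt

end NNRealPlane

section RowSubmodule

variable {I J : Set M2}

lemma smul_one_mul_of_row (t : NNReal) (v : Fin 2 → NNReal) :
    (t • 1 : M2) * Matrix.of ![v, 0] = Matrix.of ![t • v, 0] := by
  ext i j; fin_cases i <;> simp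

lemma single_zero_mul_eq_of_row (A : M2) (i : Fin 2) :
    Matrix.single 0 i 1 * A = Matrix.of ![A i, 0] := by
  ext j k; fin_cases j <;> fin_cases k <;> simp [Matrix.mul_apply, Matrix.single]

lemma eq_sum_single_mul_of_row (A : M2) :
    A = Matrix.single 0 0 1 * Matrix.of ![A 0, 0] +
      Matrix.single 1 0 1 * Matrix.of ![A 1, 0] := by
  ext j k; fin_cases j <;> fin_cases k <;> simp [Matrix.mul_apply, Matrix.single]

def rowSubmodule (hI : IsLeftIdeal I) : Submodule NNReal (Fin 2 → NNReal) where
  carrier := {v | Matrix.of ![v, 0] ∈ I}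
  zero_mem' := by
    show Matrix.of ![0, 0] ∈ I
    convert hI.1 using 1
    ext i j; fin_cases i <;> rfl
  add_mem' {v w} hv hw := by simpa using hI.2.1 _ hv _ hw
  smul_mem' t v hv := by simpa [smul_one_mul_of_row] using hI.2.2 (t • 1) _ hv

lemma mem_rowSubmodule (hI : IsLeftIdeal I) {v : Fin 2 → NNReal} :
    v ∈ rowSubmodule hI ↔ Matrix.of ![v, 0] ∈ I := Iff.rfl

lemma mem_iff_forall_row_mem (hI : IsLeftIdeal I) {A : M2} :
    A ∈ I ↔ ∀ i, A i ∈ rowSubmodule hI := by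
  refine ⟨fun hA i => ?_, fun h => ?_⟩
  · rw [mem_rowSubmodule hI, ← single_zero_mul_eq_of_row]
    exact hI.2.2 _ _ hA
  · rw [eq_sum_single_mul_of_row A]
    exact hI.2.1 _ (hI.2.2 _ _ (h 0)) _ (hI.2.2 _ _ (h 1))

lemma rowSubmodule_subtractive (hI : IsLeftIdeal I) (hS : IsSubtractive I) :
    ∀ x ∈ rowSubmodule hI, ∀ y, x + y ∈ rowSubmodule hI → y ∈ rowSubmodule hI :=
  fun x hx y hxy => hS _ _ _ hx hxy (by simp [add_comm])

lemma rowSubmodule_lt_rowSubmodule (hI : IsLeftIdeal I) (hJ : IsLeftIdeal J) (h : I ⊂ J) :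
    rowSubmodule hI < rowSubmodule hJ :=
  lt_of_le_not_ge (fun _ hv => h.subset hv) fun hle => h.not_subset fun _ hA =>
    (mem_iff_forall_row_mem hI).2 fun i => hle ((mem_iff_forall_row_mem hJ).1 hA i)

end RowSubmodule

lemma mem_Nr_iff {r : NNReal} {A : M2} : A ∈ Nr r ↔ ∀ i, A i 0 = r * A i 1 := by
  rw [Fin.forall_fin_two]
  exact ⟨fun ⟨a, b, h00, h01, h10, h11⟩ => ⟨h01 ▸ h00, h11 ▸ h10⟩,
    fun ⟨h0, h1⟩ => ⟨_, _, h0, rfl, h1, rfl⟩⟩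

lemma Nr_zero : Nr 0 = E2 := by
  ext A
  simp [mem_Nr_iff, E2, Fin.forall_fin_two]

theorem eq_zero_or_eq_univ_or_eq_E1_or_eq_Nr {I : Set M2} (hI : IsLeftIdeal I)
    (hS : IsSubtractive I) : I = {0} ∨ I = Set.univ ∨ I = E1 ∨ ∃ r : NNReal, I = Nr r := by
  rcases NNRealPlane.eq_bot_or_eq_top_or_line (rowSubmodule_subtractive hI hS)
    with h | h | h | ⟨r, h⟩
  · exact .inl <| Set.ext fun A => by
      simp [mem_iff_forall_row_mem hI, h, ← Matrix.ext_iff, funext_iff, Fin.forall_fin_two]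
  · exact .inr <| .inl <| Set.ext fun A => by simp [mem_iff_forall_row_mem hI, h]
  · exact .inr <| .inr <| .inl <| Set.ext fun A => by
      simp [mem_iff_forall_row_mem hI, h, E1, Fin.forall_fin_two]
  · exact .inr <| .inr <| .inr ⟨r, Set.ext fun A => by
      simp [mem_iff_forall_row_mem hI, h, mem_Nr_iff]⟩

theorem not_ssubset_ssubset_ssubset {I₁ I₂ I₃ I₄ : Set M2} (h₁ : IsLeftIdeal I₁)
    (h₂ : IsLeftIdeal I₂) (h₃ : IsLeftIdeal I₃) (s₃ : IsSubtractive I₃) (h₄ : IsLeftIdeal I₄) :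
    ¬(I₁ ⊂ I₂ ∧ I₂ ⊂ I₃ ∧ I₃ ⊂ I₄) := fun ⟨h₁₂, h₂₃, h₃₄⟩ =>
  NNRealPlane.not_lt_lt_lt (rowSubmodule_subtractive h₃ s₃)
    (rowSubmodule_lt_rowSubmodule h₁ h₂ h₁₂) (rowSubmodule_lt_rowSubmodule h₂ h₃ h₂₃)
    (rowSubmodule_lt_rowSubmodule h₃ h₄ h₃₄)

section ChainCondition

variable {α : Type*} [PartialOrder α] {P : α → Prop} {f : ℕ → α}

theorem Monotone.exists_forall_ge_eq_of_not_lt_lt_lt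
    (hP : ∀ a b c d, P a → P b → P c → P d → ¬(a < b ∧ b < c ∧ c < d))
    (hf : ∀ n, P (f n)) (hmono : Monotone f) : ∃ n, ∀ m, n ≤ m → f m = f n := by
  by_contra! h
  obtain ⟨m₁, h₁, hne₁⟩ := h 0
  obtain ⟨m₂, h₂, hne₂⟩ := h m₁
  obtain ⟨m₃, h₃, hne₃⟩ := h m₂
  exact hP _ _ _ _ (hf 0) (hf m₁) (hf m₂) (hf m₃) ⟨(hmono h₁).lt_of_ne hne₁.symm,
    (hmono h₂).lt_of_ne hne₂.symm, (hmono h₃).lt_of_ne hne₃.symm⟩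

theorem Antitone.exists_forall_ge_eq_of_not_lt_lt_lt
    (hP : ∀ a b c d, P a → P b → P c → P d → ¬(a < b ∧ b < c ∧ c < d))
    (hf : ∀ n, P (f n)) (hanti : Antitone f) : ∃ n, ∀ m, n ≤ m → f m = f n :=
  Monotone.exists_forall_ge_eq_of_not_lt_lt_lt (α := αᵒᵈ) (P := P ∘ OrderDual.ofDual)
    (fun a b c d ha hb hc hd ⟨hab, hbc, hcd⟩ => hP d c b a hd hc hb ha ⟨hcd, hbc, hab⟩)
    hf hanti.dual_right

end ChainCondition

/-- the only subtractive left ideals of `S = M₂(ℝ⁺)` are `{0}`, `S`,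
`E₁`, `E₂` and the `Nᵣ` (`r ≠ 0`); consequently every strictly ascending chain of
subtractive left ideals has length at most 3 (there is no chain `I₁ ⊊ I₂ ⊊ I₃ ⊊ I₄`),
i.e. `S` is left `k`-Noetherian and left `k`-Artinian. -/
theorem stmt_11 :
    (∀ I : Set M2, IsLeftIdeal I → IsSubtractive I →
      I = {0} ∨ I = Set.univ ∨ I = E1 ∨ I = E2 ∨ ∃ r : NNReal, r ≠ 0 ∧ I = Nr r) ∧
    (∀ I₁ I₂ I₃ I₄ : Set M2,
      IsLeftIdeal I₁ → IsSubtractive I₁ → IsLeftIdeal I₂ → IsSubtractive I₂ →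
      IsLeftIdeal I₃ → IsSubtractive I₃ → IsLeftIdeal I₄ → IsSubtractive I₄ →
      ¬(I₁ ⊂ I₂ ∧ I₂ ⊂ I₃ ∧ I₃ ⊂ I₄)) ∧
    (∀ f : ℕ → Set M2, (∀ n, IsLeftIdeal (f n) ∧ IsSubtractive (f n)) → Monotone f →
      ∃ n, ∀ m, n ≤ m → f m = f n) ∧
    (∀ f : ℕ → Set M2, (∀ n, IsLeftIdeal (f n) ∧ IsSubtractive (f n)) → Antitone f →
      ∃ n, ∀ m, n ≤ m → f m = f n) := by
  have no_chain : ∀ I₁ I₂ I₃ I₄ : Set M2, IsLeftIdeal I₁ ∧ IsSubtractive I₁ →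
      IsLeftIdeal I₂ ∧ IsSubtractive I₂ → IsLeftIdeal I₃ ∧ IsSubtractive I₃ →
      IsLeftIdeal I₄ ∧ IsSubtractive I₄ → ¬(I₁ ⊂ I₂ ∧ I₂ ⊂ I₃ ∧ I₃ ⊂ I₄) :=
    fun _ _ _ _ h₁ h₂ h₃ h₄ => not_ssubset_ssubset_ssubset h₁.1 h₂.1 h₃.1 h₃.2 h₄.1
  refine ⟨fun I hI hS => ?_, fun _ _ _ _ h₁ _ h₂ _ h₃ s₃ h₄ _ =>
      not_ssubset_ssubset_ssubset h₁ h₂ h₃ s₃ h₄,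
    fun _ hf hmono => hmono.exists_forall_ge_eq_of_not_lt_lt_lt no_chain hf,
    fun _ hf hanti => hanti.exists_forall_ge_eq_of_not_lt_lt_lt no_chain hf⟩
  rcases eq_zero_or_eq_univ_or_eq_E1_or_eq_Nr hI hS with h | h | h | ⟨r, rfl⟩
  · exact .inl h
  · exact .inr <| .inl h
  · exact .inr <| .inr <| .inl h
  · rcases eq_or_ne r 0 with rfl | hr
    · exact .inr <| .inr <| .inr <| .inl Nr_zero
    · exact .inr <| .inr <| .inr <| .inr ⟨r, hr, rfl⟩
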